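/- arXiv:2002.03183 — 4 statements merged into one kernel-verified Lean document; each statement's English description precedes it below -/
import Mathlib

section
/- Let G be a finite connected graph of order n ≥ 2. Then the proximity π(G) = min over vertices v of (1/(n-1))·Σ_{w} d(v,w) satisfies π(G) ≤ (n+1)/4 if n is odd, and π(G) ≤ (n+1)/4 + 1/(4(n-1)) if n is even. -/
/-!
Let `c` be a vertex of minimum transmission `σ(c) = ∑ w, d(c, w)`. For a neighbour `p` of `c`,
`σ(p) - σ(c)` is the number of vertices closer to `c` than to `p` minus the number closer to `p`
than to `c`, so at most half of all vertices are closer to `p`. From this, by induction on `r`,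
the ball of radius `r` around `c` has at least `2r + 1` vertices as long as some vertex lies
outside it: at the first failure the sphere of radius `r + 1` is a single vertex `x`, every
farther vertex is reached through `x`, and the neighbour of `c` on a geodesic towards `x` is closer
to more than half of the vertices. Hence at most `n - (2k + 1)` vertices are at distance `> k`
from `c`, and summing over `k` gives `4 σ(c) ≤ n²`.
-/

open Finset

theorem Finset.sum_eq_sum_range_card_lt {ι : Type*} (s : Finset ι) (f : ι → ℕ) {N : ℕ}
    (hf : ∀ i ∈ s, f i ≤ N) : ∑ i ∈ s, f i = ∑ k ∈ range N, #{i ∈ s | k < f i} := by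
  calc ∑ i ∈ s, f i = ∑ i ∈ s, ∑ k ∈ range N, if k < f i then 1 else 0 := by
        refine sum_congr rfl fun i hi => ?_
        rw [sum_boole, Nat.cast_id]
        have : {k ∈ range N | k < f i} = range (f i) := by
          ext k
          simp only [mem_filter, mem_range]
          have := hf i hi
          omega
        rw [this, card_range]
    _ = ∑ k ∈ range N, #{i ∈ s | k < f i} := by
        rw [sum_comm]
        simp only [sum_boole, Nat.cast_id]

theorem Nat.four_mul_sum_range_sub_le_sq (n N : ℕ) :
    4 * ∑ k ∈ range N, (n - (2 * k + 1)) ≤ n ^ 2 := by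
  suffices h : 4 * ∑ k ∈ range N, (n - (2 * k + 1)) + (n - 2 * N) ^ 2 ≤ n ^ 2 by omega
  induction N with
  | zero => simp
  | succ N ih =>
    have hsq : ∀ m : ℕ, 4 * (m - 1) + (m - 2) ^ 2 ≤ m ^ 2 := by
      rintro (_ | _ | m)
      · simp
      · simp
      · rw [show m + 1 + 1 - 2 = m by omega, show m + 1 + 1 - 1 = m + 1 by omega]
        ring_nf
        omega
    have := hsq (n - 2 * N)
    rw [sum_range_succ, show n - (2 * N + 1) = n - 2 * N - 1 by omega,
      show n - 2 * (N + 1) = n - 2 * N - 2 by omega]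
    omega

namespace SimpleGraph

variable {V : Type*} {G : SimpleGraph V}

theorem Walk.dist_getVert_le {u v : V} (p : G.Walk u v) {i j : ℕ} (hij : i ≤ j) :
    G.dist (p.getVert i) (p.getVert j) ≤ j - i := by
  have h : (p.drop i).getVert (j - i) = p.getVert j := by
    rw [drop_getVert, Nat.add_sub_cancel' hij]
  rw [← h]
  exact (G.dist_le ((p.drop i).take (j - i))).trans (by rw [take_length]; exact min_le_left ..)

theorem Walk.dist_getVert_of_length_eq_dist {u v : V} (p : G.Walk u v)
    (hp : p.length = G.dist u v) {i j : ℕ} (hij : i ≤ j) (hj : j ≤ p.length) :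
    G.dist (p.getVert i) (p.getVert j) = j - i := by
  have h₁ := p.dist_getVert_le (Nat.zero_le i)
  have h₂ := p.dist_getVert_le hij
  have h₃ := p.dist_getVert_le hj
  rw [getVert_zero] at h₁
  rw [getVert_length] at h₃
  have t₁ := Reachable.dist_triangle_left ⟨p.take j⟩ v
  have t₂ := Reachable.dist_triangle_left ⟨p.take i⟩ (p.getVert j)
  omega

theorem Walk.dist_start_getVert_of_length_eq_dist {u v : V} (p : G.Walk u v)
    (hp : p.length = G.dist u v) {i : ℕ} (hi : i ≤ p.length) : G.dist u (p.getVert i) = i := by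
  simpa using p.dist_getVert_of_length_eq_dist hp (Nat.zero_le i) hi

theorem Reachable.exists_dist_eq_of_le {u w : V} (h : G.Reachable u w) {k : ℕ}
    (hk : k ≤ G.dist u w) : ∃ x, G.dist u x = k ∧ G.dist x w = G.dist u w - k := by
  obtain ⟨p, hp⟩ := h.exists_walk_length_eq_dist
  refine ⟨p.getVert k, p.dist_start_getVert_of_length_eq_dist hp (by omega), ?_⟩
  have h := p.dist_getVert_of_length_eq_dist hp (i := k) (j := p.length) (by omega) le_rfl
  rwa [Walk.getVert_length, hp] at h

theorem Reachable.dist_add_eq_of_forall_dist_eq {c x y : V} {R : ℕ} (h : G.Reachable c y)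
    (hx : ∀ z, G.dist c z = R → z = x) (hR : R ≤ G.dist c y) :
    G.dist x y + R = G.dist c y := by
  obtain ⟨z, hz, hzy⟩ := h.exists_dist_eq_of_le hR
  rw [← hx z hz, hzy]
  omega

section Transmission

variable [Fintype V]

variable (G) in
noncomputable def transmission (v : V) : ℕ := ∑ w, G.dist v w

theorem Adj.transmission_add_card_closer {u v : V} (h : G.Adj u v) :
    G.transmission u + #{w | G.dist u w < G.dist v w} =
      G.transmission v + #{w | G.dist v w < G.dist u w} := by
  simp only [transmission, card_filter, ← sum_add_distrib]
  refine sum_congr rfl fun w _ => ?_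
  have := h.diff_dist_adj (u := w)
  rw [dist_comm (u := w), dist_comm (u := w)] at this
  split_ifs <;> omega

theorem two_mul_card_closer_le {c p : V} (hc : ∀ v, G.transmission c ≤ G.transmission v)
    (hp : G.Adj c p) : 2 * #{w | G.dist p w < G.dist c w} ≤ Fintype.card V := by
  classical
  have hσ := hp.symm.transmission_add_card_closer
  have hdisj : #{w | G.dist p w < G.dist c w} + #{w | G.dist c w < G.dist p w} ≤
      Fintype.card V := by
    rw [← card_union_of_disjoint (disjoint_filter.2 fun _ _ h => h.asymm)]
    exact card_le_univ _
  have := hc p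
  omega

variable (G) in
theorem card_dist_le_add_card_lt_dist (c : V) (r : ℕ) :
    #{y | G.dist c y ≤ r} + #{y | r < G.dist c y} = Fintype.card V := by
  simpa only [not_le, card_univ] using
    card_filter_add_card_filter_not (s := univ) (G.dist c · ≤ r)

variable (G) in
theorem card_dist_le_succ (c : V) (r : ℕ) :
    #{y | G.dist c y ≤ r + 1} = #{y | G.dist c y ≤ r} + #{y | G.dist c y = r + 1} := by
  classical
  rw [← card_union_of_disjoint (disjoint_filter.2 fun _ _ h₁ h₂ => by omega), ← filter_or]
  congr 1
  ext y
  simp only [mem_filter, mem_univ, true_and]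
  omega

theorem Walk.card_far_add_le_card_closer (hG : G.Connected) {c x : V} (q : G.Walk c x)
    (hq : q.length = G.dist c x) (hpos : 0 < q.length)
    (hx : ∀ y, G.dist c y = q.length → y = x) :
    #{y | q.length ≤ G.dist c y} + (q.length - 1) ≤
      #{y | G.dist (q.getVert 1) y < G.dist c y} := by
  classical
  have hcq : ∀ i ≤ q.length, G.dist c (q.getVert i) = i :=
    fun i hi => q.dist_start_getVert_of_length_eq_dist hq hi
  have hpq : ∀ i, 1 ≤ i → i ≤ q.length → G.dist (q.getVert 1) (q.getVert i) = i - 1 :=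
    fun i h₁ hi => q.dist_getVert_of_length_eq_dist hq h₁ hi
  set far : Finset V := {y | q.length ≤ G.dist c y}
  set closer : Finset V := {y | G.dist (q.getVert 1) y < G.dist c y}
  set geodesic := (Ico 1 q.length).image q.getVert
  have hfar : far ⊆ closer := by
    intro y hy
    simp only [far, closer, mem_filter, mem_univ, true_and] at hy ⊢
    have h₁ := (hG c y).dist_add_eq_of_forall_dist_eq hx hy
    have h₂ := hG.dist_triangle (u := q.getVert 1) (v := x) (w := y)
    have h₃ := hpq q.length hpos le_rfl
    rw [getVert_length] at h₃
    omega
  have hgeodesic : geodesic ⊆ closer := by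
    intro y hy
    obtain ⟨i, hi, rfl⟩ := mem_image.1 hy
    rw [mem_Ico] at hi
    simp only [closer, mem_filter, mem_univ, true_and]
    rw [hpq i hi.1 hi.2.le, hcq i hi.2.le]
    omega
  have hdisj : Disjoint far geodesic := by
    rw [Finset.disjoint_left]
    intro y hy hy'
    obtain ⟨i, hi, rfl⟩ := mem_image.1 hy'
    rw [mem_Ico] at hi
    simp only [far, mem_filter, mem_univ, true_and, hcq i hi.2.le] at hy
    omega
  have hcard : #geodesic = q.length - 1 := by
    rw [card_image_of_injOn, Nat.card_Ico]
    intro i hi j hj hij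
    rw [coe_Ico, Set.mem_Ico] at hi hj
    rw [← hcq i hi.2.le, ← hcq j hj.2.le, hij]
  calc #far + (q.length - 1) = #(far ∪ geodesic) := by rw [card_union_of_disjoint hdisj, hcard]
    _ ≤ #closer := card_le_card (union_subset hfar hgeodesic)

theorem two_mul_add_one_le_card_dist_le_succ (hG : G.Connected) {c w : V}
    (hc : ∀ v, G.transmission c ≤ G.transmission v) {r : ℕ} (hw : r + 1 < G.dist c w)
    (ih : 2 * r + 1 ≤ #{y | G.dist c y ≤ r}) :
    2 * (r + 1) + 1 ≤ #{y | G.dist c y ≤ r + 1} := by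
  by_contra hlt
  obtain ⟨x, hcx, -⟩ := (hG c w).exists_dist_eq_of_le hw.le
  have hsucc := G.card_dist_le_succ c r
  have hx : 0 < #{y | G.dist c y = r + 1} := card_pos.2 ⟨x, by simpa using hcx⟩
  have hsphere : ∀ y, G.dist c y = r + 1 → y = x := by
    have : #{y | G.dist c y = r + 1} ≤ 1 := by omega
    exact fun y hy => card_le_one.1 this y (by simpa using hy) x (by simpa using hcx)
  have hw' : #{y | G.dist c y ≤ r + 1} < Fintype.card V :=
    card_lt_univ_of_notMem (x := w) (by simpa using hw)
  obtain ⟨q, hq⟩ := hG.exists_walk_length_eq_dist c x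
  have hadj : G.Adj c (q.getVert 1) := by simpa using q.adj_getVert_succ (i := 0) (by omega)
  have hcloser := two_mul_card_closer_le hc hadj
  have hfar := q.card_far_add_le_card_closer hG hq (by omega) (by rwa [hq, hcx])
  simp only [hq, hcx, Nat.add_one_le_iff, Nat.add_sub_cancel] at hfar
  have hsplit := G.card_dist_le_add_card_lt_dist c r
  omega

theorem two_mul_add_one_le_card_dist_le (hG : G.Connected) {c w : V}
    (hc : ∀ v, G.transmission c ≤ G.transmission v) {r : ℕ} (hw : r < G.dist c w) :
    2 * r + 1 ≤ #{y | G.dist c y ≤ r} := by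
  induction r with
  | zero => simpa using card_pos.2 ⟨c, by simp⟩
  | succ r ih => exact two_mul_add_one_le_card_dist_le_succ hG hc hw (ih (by omega))

theorem card_lt_dist_le_card_sub (hG : G.Connected) {c : V}
    (hc : ∀ v, G.transmission c ≤ G.transmission v) (k : ℕ) :
    #{w | k < G.dist c w} ≤ Fintype.card V - (2 * k + 1) := by
  by_cases h : ∃ w, k < G.dist c w
  · obtain ⟨w, hw⟩ := h
    have := two_mul_add_one_le_card_dist_le hG hc hw
    have := G.card_dist_le_add_card_lt_dist c k
    omega
  · push Not at h
    simp [filter_eq_empty_iff.2 fun w _ => (h w).not_gt]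

theorem four_mul_transmission_le_sq (hG : G.Connected) {c : V}
    (hc : ∀ v, G.transmission c ≤ G.transmission v) :
    4 * G.transmission c ≤ Fintype.card V ^ 2 := by
  set N := univ.sup (G.dist c)
  calc 4 * G.transmission c = 4 * ∑ k ∈ range N, #{w | k < G.dist c w} := by
        rw [transmission, sum_eq_sum_range_card_lt univ _ fun w _ => le_sup (mem_univ w)]
    _ ≤ 4 * ∑ k ∈ range N, (Fintype.card V - (2 * k + 1)) := by
        gcongr with k
        exact card_lt_dist_le_card_sub hG hc k
    _ ≤ Fintype.card V ^ 2 := Nat.four_mul_sum_range_sub_le_sq _ _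

theorem Connected.exists_four_mul_transmission_le_sq (hG : G.Connected) :
    ∃ c, 4 * G.transmission c ≤ Fintype.card V ^ 2 := by
  have := hG.nonempty
  obtain ⟨c, -, hc⟩ := exists_min_image univ G.transmission univ_nonempty
  exact ⟨c, four_mul_transmission_le_sq hG fun v => hc v (mem_univ v)⟩

end Transmission

end SimpleGraph

theorem proximity_le_of_order_general {V : Type*} [Fintype V] [Nonempty V]
    (G : SimpleGraph V) (hG : G.Connected) :
    (Odd (Fintype.card V) →
      Finset.univ.inf' Finset.univ_nonempty
        (fun v => (∑ w, (G.dist v w : ℝ)) / ((Fintype.card V : ℝ) - 1))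
        ≤ ((Fintype.card V : ℝ) + 1) / 4) ∧
    (Even (Fintype.card V) →
      Finset.univ.inf' Finset.univ_nonempty
        (fun v => (∑ w, (G.dist v w : ℝ)) / ((Fintype.card V : ℝ) - 1))
        ≤ ((Fintype.card V : ℝ) + 1) / 4 + 1 / (4 * ((Fintype.card V : ℝ) - 1))) := by
  obtain ⟨c, hc⟩ := hG.exists_four_mul_transmission_le_sq
  set n := Fintype.card V
  have hn : 1 ≤ n := Fintype.card_pos
  have hle : univ.inf' univ_nonempty (fun v => (∑ w, (G.dist v w : ℝ)) / ((n : ℝ) - 1)) ≤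
      (G.transmission c : ℝ) / ((n : ℝ) - 1) := by
    refine (inf'_le _ (mem_univ c)).trans_eq ?_
    simp [SimpleGraph.transmission]
  have hn' : (1 : ℝ) ≤ n := by exact_mod_cast hn
  refine ⟨fun hodd => hle.trans (div_le_of_le_mul₀ (by linarith) (by positivity) ?_),
    fun heven => hle.trans ?_⟩
  · -- `n²` is odd, so `4 σ(c) ≤ n²` is strict
    have h : 4 * G.transmission c + 1 ≤ n ^ 2 := by
      obtain ⟨k, hk⟩ := hodd.pow (n := 2)
      omega
    have h' : 4 * (G.transmission c : ℝ) + 1 ≤ (n : ℝ) ^ 2 := by exact_mod_cast h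
    nlinarith
  · have hn2 : (2 : ℝ) ≤ n := by
      obtain ⟨k, hk⟩ := heven
      exact_mod_cast (show 2 ≤ n by omega)
    have h : 4 * (G.transmission c : ℝ) ≤ (n : ℝ) ^ 2 := by exact_mod_cast hc
    rw [div_le_iff₀ (by linarith)]
    have hrhs : ((n + 1) / 4 + 1 / (4 * (n - 1))) * (n - 1) = (n : ℝ) ^ 2 / 4 := by
      have : (n : ℝ) - 1 ≠ 0 := by linarith
      field_simp
      ring
    rw [hrhs]
    linarith

/-- Bound on the proximity of a connected graph of order `n ≥ 2`. -/
theorem proximity_le_of_order {V : Type*} [Fintype V] [Nonempty V]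
    (G : SimpleGraph V) (hG : G.Connected) (hn : 2 ≤ Fintype.card V) :
    (Odd (Fintype.card V) →
      Finset.univ.inf' Finset.univ_nonempty
        (fun v => (∑ w, (G.dist v w : ℝ)) / ((Fintype.card V : ℝ) - 1))
        ≤ ((Fintype.card V : ℝ) + 1) / 4) ∧
    (Even (Fintype.card V) →
      Finset.univ.inf' Finset.univ_nonempty
        (fun v => (∑ w, (G.dist v w : ℝ)) / ((Fintype.card V : ℝ) - 1))
        ≤ ((Fintype.card V : ℝ) + 1) / 4 + 1 / (4 * ((Fintype.card V : ℝ) - 1))) :=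
  proximity_le_of_order_general G hG
end

section
/- Let u be a vertex of a connected triangle-free graph G of minimum degree δ, and suppose the sphere N_i(u) is nonempty for some i ≥ 0. Then |N_{i-1}(u)| + |N_i(u)| + |N_{i+1}(u)| ≥ δ + 1. -/
/-- The set of vertices at distance exactly `j` from `u` (with `j : ℤ`, so empty for `j < 0`). -/
noncomputable def SimpleGraph.isphere {V : Type*} [Fintype V] (G : SimpleGraph V) (u : V) (j : ℤ) : Finset V :=
  Finset.univ.filter (fun w => (G.dist u w : ℤ) = j)

/-! The closed neighbourhood of a vertex `v` at distance `i` from `u` has at least `δ + 1`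
vertices, and it lies in the spheres of radii `i - 1`, `i`, `i + 1` because the distances
of adjacent vertices from `u` differ by at most one. -/

open Finset

namespace SimpleGraph

variable {V : Type*} [Fintype V] (G : SimpleGraph V)

theorem mem_isphere {u w : V} {j : ℤ} : w ∈ G.isphere u j ↔ (G.dist u w : ℤ) = j := by
  simp [isphere]

variable [DecidableEq V] [DecidableRel G.Adj]

theorem insert_neighborFinset_subset_isphere {u v : V} {j : ℤ} (hv : v ∈ G.isphere u j) :
    insert v (G.neighborFinset v) ⊆ G.isphere u (j - 1) ∪ G.isphere u j ∪ G.isphere u (j + 1) := by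
  rw [mem_isphere] at hv
  intro w hw
  simp only [mem_union, mem_isphere]
  rcases mem_insert.mp hw with rfl | hvw
  · omega
  · rcases ((G.mem_neighborFinset v w).mp hvw).diff_dist_adj (u := u) with h | h | h <;> omega

end SimpleGraph

open SimpleGraph in
theorem three_spheres_triangle_free_general {V : Type*} [Fintype V]
    (G : SimpleGraph V) [DecidableRel G.Adj] (δ : ℕ) (hδ : ∀ v, δ ≤ G.degree v)
    (u : V) (i : ℕ) (h1 : (G.isphere u i).Nonempty) :
    δ + 1 ≤ (G.isphere u ((i : ℤ) - 1)).card + (G.isphere u i).card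
      + (G.isphere u ((i : ℤ) + 1)).card := by
  classical
  obtain ⟨v, hv⟩ := h1
  calc δ + 1 ≤ #(insert v (G.neighborFinset v)) := by
        rw [card_insert_of_notMem (G.notMem_neighborFinset_self v), card_neighborFinset_eq_degree]
        exact Nat.add_le_add_right (hδ v) 1
    _ ≤ #(G.isphere u (i - 1) ∪ G.isphere u i ∪ G.isphere u (i + 1)) :=
        card_le_card (G.insert_neighborFinset_subset_isphere hv)
    _ ≤ _ := (card_union_le _ _).trans (by gcongr; exact card_union_le _ _)

/-- In a connected triangle-free graph of minimum degree `δ`, if the sphere of radius `i`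
around `u` is nonempty, then the spheres of radii `i-1, i, i+1` together contain at least
`δ + 1` vertices. -/
theorem three_spheres_triangle_free {V : Type*} [Fintype V] [DecidableEq V]
    (G : SimpleGraph V) [DecidableRel G.Adj] (hG : G.Connected)
    (htf : G.CliqueFree 3) (δ : ℕ) (hδ : ∀ v, δ ≤ G.degree v)
    (u : V) (i : ℕ) (h1 : (G.isphere u i).Nonempty) :
    δ + 1 ≤ (G.isphere u ((i : ℤ) - 1)).card + (G.isphere u i).card
      + (G.isphere u ((i : ℤ) + 1)).card :=
  three_spheres_triangle_free_general G δ hδ u i h1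
end

section
/- Let u be a vertex of a connected C₄-free graph G of minimum degree δ, and let i with 0 ≤ i ≤ ecc(u) be such that N_i(u) is nonempty. Then |N_{i-2}(u)| + |N_{i-1}(u)| + |N_i(u)| + |N_{i+1}(u)| + |N_{i+2}(u)| ≥ δ² - 2⌊δ/2⌋ + 1. -/
/-- A graph contains a 4-cycle as a (not necessarily induced) subgraph. -/
def SimpleGraph.HasC4 {V : Type*} (G : SimpleGraph V) : Prop :=
  ∃ a b c d : V, a ≠ c ∧ b ≠ d ∧ G.Adj a b ∧ G.Adj b c ∧ G.Adj c d ∧ G.Adj d a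

/-- The eccentricity of a vertex: the maximum distance from it to any vertex. -/
noncomputable def SimpleGraph.eccentSup {V : Type*} [Fintype V] (G : SimpleGraph V) (u : V) : ℕ :=
  Finset.univ.sup (fun w => G.dist u w)

/-!
Pick `v ∈ N_i(u)`; every vertex within distance 2 of `v` lies in one of the five spheres, so it
suffices to bound the closed 2-ball around `v`. Take `δ` neighbours `S` of `v`. Since two distinct
vertices of a `C₄`-free graph have at most one common neighbour, each `w ∈ S` has at most one
neighbour in `S`, and the neighbours of distinct `w, w' ∈ S` outside `{v} ∪ S` are disjoint. Each
`w ∈ S` therefore contributes at least `δ - 1 - m(w)` new vertices, where `m(w) ≤ 1` counts its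
neighbours in `S`; as `∑ m(w)` is twice the number of edges inside `S`, it is at most `2⌊δ/2⌋`.
-/

open Finset

theorem Finset.even_sum_sum_of_symm {α : Type*} (s : Finset α) (f : α → α → ℕ)
    (hsymm : ∀ a b, f a b = f b a) (hdiag : ∀ a, f a a = 0) :
    Even (∑ a ∈ s, ∑ b ∈ s, f a b) := by
  rw [← ZMod.natCast_eq_zero_iff_even, ← sum_product', Nat.cast_sum]
  refine sum_involution (fun p _ => p.swap) (fun ⟨a, b⟩ _ => ?_) (fun ⟨a, b⟩ _ hab => ?_)
    (fun p hp => mem_product.2 (mem_product.1 hp).symm) (fun p _ => p.swap_swap)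
  · rw [Prod.swap_prod_mk, hsymm b, ← two_mul]
    exact zero_mul _
  · intro h
    obtain rfl : b = a := congrArg Prod.fst h
    simp [hdiag] at hab

theorem SimpleGraph.Connected.abs_dist_sub_dist_le {V : Type*} {G : SimpleGraph V}
    (hG : G.Connected) (u v x : V) : |(G.dist u x : ℤ) - G.dist u v| ≤ G.dist v x := by
  have h₁ : G.dist u x ≤ G.dist u v + G.dist v x := hG.dist_triangle
  have h₂ : G.dist u v ≤ G.dist u x + G.dist x v := hG.dist_triangle
  rw [dist_comm (u := x)] at h₂
  rw [abs_le]
  omega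

namespace SimpleGraph

variable {V : Type*} [Fintype V] [DecidableEq V] (G : SimpleGraph V) [DecidableRel G.Adj]

theorem card_neighborFinset_inter_le_one (hC4 : ¬G.HasC4) {a b : V} (hab : a ≠ b) :
    #(G.neighborFinset a ∩ G.neighborFinset b) ≤ 1 := by
  refine card_le_one.2 fun x hx y hy => by_contra fun hxy => hC4 ?_
  simp only [mem_inter, mem_neighborFinset] at hx hy
  exact ⟨x, a, y, b, hxy, hab, hx.1.symm, hy.1, hy.2.symm, hx.2⟩

theorem even_sum_card_neighborFinset_inter (S : Finset V) :
    Even (∑ w ∈ S, #(G.neighborFinset w ∩ S)) := by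
  have h : ∀ w ∈ S,
      #(G.neighborFinset w ∩ S) = ∑ w' ∈ S, if G.Adj w w' then 1 else 0 := by
    intro w _
    rw [sum_boole, Nat.cast_id, inter_comm, ← filter_mem_eq_inter]
    simp only [mem_neighborFinset]
  rw [sum_congr rfl h]
  exact S.even_sum_sum_of_symm _ (fun a b => by simp only [G.adj_comm]) (fun a => by simp)

theorem degree_le_card_sdiff_add_card_inter (v w : V) (S : Finset V) :
    G.degree w ≤ #(G.neighborFinset w \ insert v S) + 1 + #(G.neighborFinset w ∩ S) := by
  have hsub : G.neighborFinset w ⊆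
      (G.neighborFinset w \ insert v S) ∪ insert v (G.neighborFinset w ∩ S) := by
    intro x hx
    by_cases hxS : x ∈ insert v S <;> grind
  calc G.degree w = #(G.neighborFinset w) := (card_neighborFinset_eq_degree G w).symm
    _ ≤ _ := card_le_card hsub
    _ ≤ #(G.neighborFinset w \ insert v S) + #(insert v (G.neighborFinset w ∩ S)) :=
      card_union_le _ _
    _ ≤ _ := by grw [card_insert_le]; omega

section NeighborSubset

variable {G} {v : V} {S : Finset V} (hSv : S ⊆ G.neighborFinset v)
include hSv

theorem sum_card_neighborFinset_inter_le (hC4 : ¬G.HasC4) :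
    ∑ w ∈ S, #(G.neighborFinset w ∩ S) ≤ 2 * (#S / 2) := by
  have hle_one : ∀ w ∈ S, #(G.neighborFinset w ∩ S) ≤ 1 := fun w hw =>
    (card_le_card (inter_subset_inter_left hSv)).trans <|
      G.card_neighborFinset_inter_le_one hC4 ((G.mem_neighborFinset v w).1 (hSv hw)).ne'
  have := (sum_le_sum hle_one).trans_eq (card_eq_sum_ones S).symm
  obtain ⟨k, hk⟩ := G.even_sum_card_neighborFinset_inter S
  omega

theorem card_insert_union_biUnion_neighborFinset_sdiff (hC4 : ¬G.HasC4) :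
    #(insert v (S ∪ S.biUnion fun w => G.neighborFinset w \ insert v S)) =
      1 + #S + ∑ w ∈ S, #(G.neighborFinset w \ insert v S) := by
  have hvS : v ∉ S := fun h => G.irrefl ((G.mem_neighborFinset v v).1 (hSv h))
  -- `x ≠ v` would be a second common neighbour of `w ≠ w'`, besides `v`
  have hdisj : (S : Set V).PairwiseDisjoint fun w => G.neighborFinset w \ insert v S := by
    intro w hw w' hw' hww'
    refine Finset.disjoint_left.2 fun x hx hx' => ?_
    simp only [mem_sdiff, mem_insert, not_or] at hx hx'
    have hvw := hSv hw
    have hvw' := hSv hw'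
    refine hx.2.1 (card_le_one.1 (G.card_neighborFinset_inter_le_one hC4 hww') x ?_ v ?_) <;>
      simp_all [adj_comm]
  rw [← insert_union, card_union_of_disjoint ((disjoint_biUnion_right _ _ _).2 fun _ _ =>
    disjoint_sdiff), card_insert_of_notMem hvS, card_biUnion hdisj]
  ring

theorem insert_union_biUnion_neighborFinset_sdiff_subset :
    insert v (S ∪ S.biUnion fun w => G.neighborFinset w \ insert v S) ⊆
      ({x | G.dist v x ≤ 2} : Finset V) := by
  have hvS : ∀ w ∈ S, G.Adj v w := fun w hw => (G.mem_neighborFinset v w).1 (hSv hw)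
  intro x hx
  rw [mem_filter_univ]
  rcases mem_insert.1 hx with rfl | hx
  · simp
  rcases mem_union.1 hx with hxS | hxB
  · exact (G.dist_le (hvS x hxS).toWalk).trans (by simp)
  obtain ⟨w, hw, hxw⟩ := mem_biUnion.1 hxB
  have hwx : G.Adj w x := (G.mem_neighborFinset w x).1 (mem_sdiff.1 hxw).1
  exact G.dist_le (.cons (hvS w hw) (.cons hwx .nil))

end NeighborSubset

theorem le_card_filter_dist_le_two (hC4 : ¬G.HasC4) {δ : ℕ} (hδ : ∀ v, δ ≤ G.degree v)
    (v : V) : δ ^ 2 - 2 * (δ / 2) + 1 ≤ #{x | G.dist v x ≤ 2} := by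
  obtain ⟨S, hSv, hS⟩ := exists_subset_card_eq (hδ v)
  have hdeg : δ * δ ≤ ∑ w ∈ S, #(G.neighborFinset w \ insert v S) + δ + 2 * (δ / 2) := by
    have hsum := sum_le_sum fun w (_ : w ∈ S) =>
      (hδ w).trans (G.degree_le_card_sdiff_add_card_inter v w S)
    have hinner := sum_card_neighborFinset_inter_le hSv hC4
    simp only [sum_add_distrib, sum_const, hS, smul_eq_mul, mul_one] at hsum hinner
    omega
  calc δ ^ 2 - 2 * (δ / 2) + 1 ≤ 1 + δ + ∑ w ∈ S, #(G.neighborFinset w \ insert v S) := by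
        rw [sq]; omega
    _ = _ := by rw [card_insert_union_biUnion_neighborFinset_sdiff hSv hC4, hS]
    _ ≤ _ := card_le_card (insert_union_biUnion_neighborFinset_sdiff_subset hSv)

end SimpleGraph

theorem five_spheres_C4_free_general {V : Type*} [Fintype V]
    (G : SimpleGraph V) [DecidableRel G.Adj] (hG : G.Connected) (hC4 : ¬ G.HasC4)
    (δ : ℕ) (hδ : ∀ v, δ ≤ G.degree v)
    (u : V) (i : ℕ) (hne : (G.isphere u i).Nonempty) :
    δ ^ 2 - 2 * (δ / 2) + 1 ≤
      (G.isphere u ((i : ℤ) - 2)).card + (G.isphere u ((i : ℤ) - 1)).card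
      + (G.isphere u i).card + (G.isphere u ((i : ℤ) + 1)).card
      + (G.isphere u ((i : ℤ) + 2)).card := by
  classical
  obtain ⟨v, hv⟩ := hne
  have hball : ({x | G.dist v x ≤ 2} : Finset V) ⊆
      G.isphere u (i - 2) ∪ G.isphere u (i - 1) ∪ G.isphere u i ∪ G.isphere u (i + 1) ∪
        G.isphere u (i + 2) := by
    intro x hx
    have := abs_le.1 (hG.abs_dist_sub_dist_le u v x)
    simp only [SimpleGraph.isphere, mem_filter, mem_union, mem_univ, true_and] at hv hx ⊢
    omega
  calc δ ^ 2 - 2 * (δ / 2) + 1 ≤ #{x | G.dist v x ≤ 2} :=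
        G.le_card_filter_dist_le_two hC4 hδ v
    _ ≤ _ := card_le_card hball
    _ ≤ _ := by
      refine (card_union_le _ _).trans (Nat.add_le_add_right ?_ _)
      refine (card_union_le _ _).trans (Nat.add_le_add_right ?_ _)
      refine (card_union_le _ _).trans (Nat.add_le_add_right ?_ _)
      exact card_union_le _ _

/-- In a connected `C₄`-free graph of minimum degree `δ`, for any nonempty sphere `N_i(u)`,
the five spheres of radii `i-2,…,i+2` contain at least `δ² - 2⌊δ/2⌋ + 1` vertices. -/
theorem five_spheres_C4_free {V : Type*} [Fintype V] [DecidableEq V]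
    (G : SimpleGraph V) [DecidableRel G.Adj] (hG : G.Connected) (hC4 : ¬ G.HasC4)
    (δ : ℕ) (hδ : ∀ v, δ ≤ G.degree v)
    (u : V) (i : ℕ) (hi : i ≤ G.eccentSup u) (hne : (G.isphere u i).Nonempty) :
    δ ^ 2 - 2 * (δ / 2) + 1 ≤
      (G.isphere u ((i : ℤ) - 2)).card + (G.isphere u ((i : ℤ) - 1)).card
      + (G.isphere u i).card + (G.isphere u ((i : ℤ) + 1)).card
      + (G.isphere u ((i : ℤ) + 2)).card :=
  five_spheres_C4_free_general G hG hC4 δ hδ u i hne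
end

section
/- Let G be a finite connected graph of order n ≥ 2, let u₀ be any vertex, and suppose the sequence of parts sizes of G with respect to u₀ is palindromic, i.e. with d = ecc(u₀) and nᵢ = |N_i(u₀)|, we have nᵢ = n_{d-i} for all 0 ≤ i ≤ d. Then for every vertex w of G, Σ_v d(w,v) ≥ Σ_{i=0}^{⌊(d-1)/2⌋} (d - 2i)·nᵢ. -/
/-!
Let `t = d(u₀, w)`. By the triangle inequality every vertex of `N_i(u₀)` is at distance at least
`t - i` from `w`, and every vertex of `N_{d-i}(u₀)` at distance at least `d - i - t`; since the two
spheres have the same size `nᵢ`, together they contribute at least `(d - 2i)·nᵢ` to `Σ_v d(w,v)`.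
For `0 < d` and `i ≤ (d-1)/2` the indices `i` and `d - i` are pairwise distinct, so these spheres
are disjoint and the contributions add up.
-/

/-- The set of vertices at distance exactly `i` from `u`. -/
noncomputable def SimpleGraph.nsphere {V : Type*} [Fintype V] (G : SimpleGraph V) (u : V) (i : ℕ) : Finset V :=
  Finset.univ.filter (fun w => G.dist u w = i)

/-- The eccentricity of a vertex: the maximum distance from it to any vertex. -/
noncomputable def SimpleGraph.eccentNat {V : Type*} [Fintype V] (G : SimpleGraph V) (u : V) : ℕ :=
  Finset.univ.sup (fun w => G.dist u w)

open Finset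

namespace SimpleGraph

variable {V : Type*} {G : SimpleGraph V}

lemma Connected.dist_sub_dist_le (hG : G.Connected) (u v w : V) :
    G.dist u v - G.dist u w ≤ G.dist w v := by
  have := hG.dist_triangle (u := u) (v := w) (w := v)
  omega

variable [Fintype V]

@[simp]
lemma mem_nsphere {u v : V} {i : ℕ} : v ∈ G.nsphere u i ↔ G.dist u v = i := by
  simp [nsphere]

lemma sum_sum_nsphere_le_sum {M : Type*} [AddCommMonoid M] [PartialOrder M]
    [IsOrderedAddMonoid M] (u : V) (s : Finset ℕ) {f : V → M} (hf : ∀ v, 0 ≤ f v) :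
    ∑ i ∈ s, ∑ v ∈ G.nsphere u i, f v ≤ ∑ v, f v := by
  simp only [nsphere]
  rw [sum_fiberwise_eq_sum_filter]
  exact sum_le_univ_sum_of_nonneg hf

lemma sum_sum_nsphere_add_sum_nsphere_sub_le_sum {M : Type*} [AddCommMonoid M] [PartialOrder M]
    [IsOrderedAddMonoid M] (u : V) {d : ℕ} {s : Finset ℕ} (hs : ∀ i ∈ s, 2 * i < d) {f : V → M}
    (hf : ∀ v, 0 ≤ f v) :
    ∑ i ∈ s, (∑ v ∈ G.nsphere u i, f v + ∑ v ∈ G.nsphere u (d - i), f v) ≤ ∑ v, f v := by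
  have hdisj : Disjoint s (s.image (d - ·)) := by
    simp only [Finset.disjoint_left, mem_image, not_exists, not_and]
    intro i hi j hj hji
    have := hs i hi
    have := hs j hj
    omega
  have hinj : Set.InjOn (d - ·) s := fun i hi j hj hij => by
    have := hs i hi
    have := hs j hj
    simp only at hij
    omega
  have h := sum_sum_nsphere_le_sum (G := G) u (s ∪ s.image (d - ·)) hf
  rwa [sum_union hdisj, sum_image hinj, ← sum_add_distrib] at h

lemma Connected.sub_le_sum_dist_add_sum_dist (hG : G.Connected) {u : V} (w : V) {i j : ℕ}
    (hcard : #(G.nsphere u i) = #(G.nsphere u j)) :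
    (j - i) * #(G.nsphere u i) ≤
      ∑ v ∈ G.nsphere u i, G.dist w v + ∑ v ∈ G.nsphere u j, G.dist w v := by
  set t := G.dist u w
  have hi : #(G.nsphere u i) • (t - i) ≤ ∑ v ∈ G.nsphere u i, G.dist w v :=
    card_nsmul_le_sum _ _ _ fun v hv => by
      rw [G.dist_comm]
      exact mem_nsphere.1 hv ▸ hG.dist_sub_dist_le u w v
  have hj : #(G.nsphere u j) • (j - t) ≤ ∑ v ∈ G.nsphere u j, G.dist w v :=
    card_nsmul_le_sum _ _ _ fun v hv => mem_nsphere.1 hv ▸ hG.dist_sub_dist_le u v w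
  rw [smul_eq_mul] at hi hj
  rw [← hcard] at hj
  calc (j - i) * #(G.nsphere u i)
      ≤ ((t - i) + (j - t)) * #(G.nsphere u i) := Nat.mul_le_mul_right _ (by omega)
    _ = #(G.nsphere u i) * (t - i) + #(G.nsphere u i) * (j - t) := by ring
    _ ≤ _ := add_le_add hi hj

end SimpleGraph

open SimpleGraph

theorem total_dist_lower_bound_of_palindromic_general {V : Type*} [Fintype V]
    (G : SimpleGraph V) (hG : G.Connected)
    (u₀ : V) (d : ℕ)
    (hpal : ∀ i ≤ d, (G.nsphere u₀ i).card = (G.nsphere u₀ (d - i)).card) :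
    ∀ w : V, ∑ i ∈ Finset.range ((d - 1) / 2 + 1), (d - 2 * i) * (G.nsphere u₀ i).card
      ≤ ∑ v, G.dist w v := by
  intro w
  obtain rfl | hd := Nat.eq_zero_or_pos d
  · simp
  have hlt : ∀ i ∈ range ((d - 1) / 2 + 1), 2 * i < d := fun i hi => by
    have := mem_range.1 hi
    omega
  calc ∑ i ∈ range ((d - 1) / 2 + 1), (d - 2 * i) * #(G.nsphere u₀ i)
      ≤ ∑ i ∈ range ((d - 1) / 2 + 1),
          (∑ v ∈ G.nsphere u₀ i, G.dist w v + ∑ v ∈ G.nsphere u₀ (d - i), G.dist w v) :=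
        sum_le_sum fun i hi => by
          have h := hG.sub_le_sum_dist_add_sum_dist w (hpal i (by linarith [hlt i hi]))
          rwa [Nat.sub_sub, ← two_mul] at h
    _ ≤ ∑ v, G.dist w v := sum_sum_nsphere_add_sum_nsphere_sub_le_sum u₀ hlt fun _ => Nat.zero_le _

/-- If the distance-degree sequence of `u₀` is palindromic (with `d = ecc(u₀)` odd),
then every vertex `w` satisfies `Σ_v d(w,v) ≥ Σ_{i=0}^{(d-1)/2} (d - 2i)·nᵢ`. -/
theorem total_dist_lower_bound_of_palindromic {V : Type*} [Fintype V] [DecidableEq V]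
    (G : SimpleGraph V) (hG : G.Connected) (hn : 2 ≤ Fintype.card V)
    (u₀ : V) (d : ℕ) (hd : d = G.eccentNat u₀) (hodd : Odd d)
    (hpal : ∀ i ≤ d, (G.nsphere u₀ i).card = (G.nsphere u₀ (d - i)).card) :
    ∀ w : V, ∑ i ∈ Finset.range ((d - 1) / 2 + 1), (d - 2 * i) * (G.nsphere u₀ i).card
      ≤ ∑ v, G.dist w v :=
  total_dist_lower_bound_of_palindromic_general G hG u₀ d hpal
end
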